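/- Under conditions (Ha) and (Hb), if A(x)/ℓ(x) → κ > 0 as x → ∞, then m(x)/A(x) → κ as x → ∞; conversely if m(x)/A(x) → κ with κ > 0, then A(x)/ℓ(x) → κ. -/

import Mathlib

open MeasureTheory Filter Set Asymptotics Topology

/-- Tail of a distribution: `1 - F(x) = P[X > x]`. -/
noncomputable def tailF (μ : Measure ℝ) (x : ℝ) : ℝ := (μ (Set.Ioi x)).toReal

/-- A function is slowly varying at infinity. -/
def SlowlyVarying (f : ℝ → ℝ) : Prop :=
  (∀ᶠ x in atTop, 0 < f x) ∧
    ∀ c : ℝ, 1 < c → Tendsto (fun x => f (c * x) / f x) atTop (𝓝 1)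

/-- Two-sided tail `H(x) = P[|X| > x] = 1 - F(x) + F(-x-0)`. -/
noncomputable def Hf (μ : Measure ℝ) (x : ℝ) : ℝ := (μ {y : ℝ | x < |y|}).toReal

/-- `K(x) = P[X > x] - P[X < -x] = 1 - F(x) - F(-x-0)`. -/
noncomputable def Kf (μ : Measure ℝ) (x : ℝ) : ℝ :=
  (μ (Set.Ioi x)).toReal - (μ (Set.Iio (-x))).toReal

/-- `A(x) = ∫₀ˣ K(t) dt`. -/
noncomputable def Af (μ : Measure ℝ) (x : ℝ) : ℝ := ∫ t in (0:ℝ)..x, Kf μ t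

/-- `ℓ(x) = ∫₀ˣ H(t) dt`. -/
noncomputable def ellH (μ : Measure ℝ) (x : ℝ) : ℝ := ∫ t in (0:ℝ)..x, Hf μ t

/-- `m(x)`, defined by `1/m(x) = ∫ₓ^∞ H(t)/A²(t) dt`. -/
noncomputable def mF (μ : Measure ℝ) (x : ℝ) : ℝ :=
  (∫ t in Set.Ioi x, Hf μ t / (Af μ t) ^ 2)⁻¹

/-- `r₊(x) = ∫ₓ^∞ (1-F(t))/A²(t) dt`. -/
noncomputable def rPlus (μ : Measure ℝ) (x : ℝ) : ℝ :=
  ∫ t in Set.Ioi x, tailF μ t / (Af μ t) ^ 2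

/-- `r₋(x) = ∫ₓ^∞ F(-t)/A²(t) dt`. -/
noncomputable def rMinus (μ : Measure ℝ) (x : ℝ) : ℝ :=
  ∫ t in Set.Ioi x, (μ (Set.Iio (-t))).toReal / (Af μ t) ^ 2

/-- Condition (Ha): `A(x)/(x H(x)) → ∞`, i.e. positive relative stability. -/
def HaCond (μ : Measure ℝ) : Prop :=
  Tendsto (fun x => Af μ x / (x * Hf μ x)) atTop atTop

/-- Condition (Hb): `∫_{x₀}^∞ H(x)/A²(x) dx < ∞` for some `x₀ > 0`
with `A` positive on `[x₀, ∞)`. -/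
def HbCond (μ : Measure ℝ) : Prop :=
  ∃ x₀ : ℝ, 0 < x₀ ∧ (∀ x ≥ x₀, 0 < Af μ x) ∧
    IntegrableOn (fun x => Hf μ x / (Af μ x) ^ 2) (Set.Ioi x₀)

/-- `X` is arithmetic: `X/h ∈ ℤ` almost surely for some `h > 0`. -/
def IsArith (μ : Measure ℝ) : Prop :=
  ∃ h : ℝ, 0 < h ∧ μ {x : ℝ | ∃ n : ℤ, x = n * h} = 1

/-- Characteristic function `φ(θ) = E[e^{iθX}]`. -/
noncomputable def charF (μ : Measure ℝ) (θ : ℝ) : ℂ :=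
  ∫ x, Complex.exp (Complex.I * θ * x) ∂μ

/-!
Since `E|X| = ∞`, the layer-cake formula gives `ℓ(x) → ∞`.

If `A/ℓ → κ`: as `ℓ' = H`, `∫ₓ^∞ H/ℓ² = 1/ℓ(x)`, and `H/A² = (ℓ/A)² · H/ℓ²`
with `(ℓ/A)² → κ⁻²`, so `1/m(x) ~ κ⁻²/ℓ(x)` and `m/A = ((ℓ/m) · (A/ℓ))⁻¹ → κ`.

If `m/A → κ`, i.e. `φ = A/m → κ⁻¹`: the derivative of `ℓ + A(A/m - 2κ⁻¹)` is
`2(φ - κ⁻¹)K` off the countable set where `H` or `K` jumps, so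
`ℓ - κ⁻¹A = C + 2∫ₓ₀ˣ (φ - κ⁻¹)K - A(φ - κ⁻¹)`. Since `|K| ≤ H` and `|A| ≤ ℓ`,
the right-hand side is `o(ℓ)`, whence `A/ℓ → κ`.
-/

section TailIntegrals

variable {f : ℝ → ℝ} {a : ℝ}

lemma hasDerivAt_integral_Ioi (hf : IntegrableOn f (Ioi a)) {x : ℝ} (hax : a < x)
    (hfm : StronglyMeasurableAtFilter f (𝓝 x)) (hfx : ContinuousAt f x) :
    HasDerivAt (fun y => ∫ t in Ioi y, f t) (-f x) x := by
  have hprim : HasDerivAt (fun y => ∫ t in a..y, f t) (f x) x :=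
    intervalIntegral.integral_hasDerivAt_right
      ((intervalIntegrable_iff_integrableOn_Ioc_of_le hax.le).2
        (hf.mono_set Ioc_subset_Ioi_self)) hfm hfx
  refine (hprim.const_sub (∫ t in Ioi a, f t)).congr_of_eventuallyEq ?_
  filter_upwards [Ioi_mem_nhds hax] with y hy
  rw [← intervalIntegral.integral_Ioi_sub_Ioi hf (le_of_lt hy), sub_sub_cancel]

lemma integral_Ioi_of_hasDerivAt_off_countable_of_nonneg {F : ℝ → ℝ} {m : ℝ} {s : Set ℝ}
    (hs : s.Countable) (hF : ContinuousOn F (Ici a))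
    (hderiv : ∀ x ∈ Ioi a \ s, HasDerivAt F (f x) x)
    (hint : ∀ b, IntegrableOn f (Ioc a b)) (hnonneg : ∀ x ∈ Ioi a, 0 ≤ f x)
    (hlim : Tendsto F atTop (𝓝 m)) :
    ∫ x in Ioi a, f x = m - F a := by
  have hftc : ∀ b ≥ a, ∫ x in a..b, f x = F b - F a := fun b hb =>
    integral_eq_of_hasDerivAt_off_countable_of_le F f hb hs (hF.mono Icc_subset_Ici_self)
      (fun x hx => hderiv x ⟨hx.1.1, hx.2⟩)
      ((intervalIntegrable_iff_integrableOn_Ioc_of_le hb).2 (hint b))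
  have hprim : Tendsto (fun b => ∫ x in a..b, f x) atTop (𝓝 (m - F a)) :=
    (hlim.sub_const (F a)).congr' <| by
      filter_upwards [eventually_ge_atTop a] with b hb using (hftc b hb).symm
  have hIoi : IntegrableOn f (Ioi a) := by
    refine integrableOn_Ioi_of_intervalIntegral_norm_tendsto (m - F a) a hint tendsto_id
      (hprim.congr' ?_)
    filter_upwards [eventually_ge_atTop a] with b hb
    refine intervalIntegral.integral_congr_ae (ae_of_all _ fun x hx => ?_)
    rw [uIoc_of_le hb] at hx
    exact (Real.norm_of_nonneg (hnonneg x hx.1)).symm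
  exact tendsto_nhds_unique (intervalIntegral_tendsto_integral_Ioi a hIoi tendsto_id) hprim

lemma tendsto_integral_Ioi_div_integral_Ioi {g u : ℝ → ℝ} {c : ℝ}
    (hf : IntegrableOn f (Ioi a)) (hg : ∀ᶠ t in atTop, 0 ≤ g t)
    (hgpos : ∀ᶠ x in atTop, 0 < ∫ t in Ioi x, g t)
    (hfg : ∀ᶠ t in atTop, f t = u t * g t) (hu : Tendsto u atTop (𝓝 c)) :
    Tendsto (fun x => (∫ t in Ioi x, f t) / ∫ t in Ioi x, g t) atTop (𝓝 c) := by
  rw [Metric.tendsto_nhds]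
  intro ε hε
  obtain ⟨b, hb⟩ := eventually_atTop.1
    ((hu.eventually (Metric.closedBall_mem_nhds c (half_pos hε))).and (hg.and hfg))
  filter_upwards [eventually_ge_atTop (max a b), hgpos] with x hx hpos
  have hfx : IntegrableOn f (Ioi x) := hf.mono_set (Ioi_subset_Ioi (le_of_max_le_left hx))
  have hgx : IntegrableOn g (Ioi x) := Integrable.of_integral_ne_zero hpos.ne'
  have hbound :
      |(∫ t in Ioi x, f t) - c * ∫ t in Ioi x, g t| ≤ ε / 2 * ∫ t in Ioi x, g t := by
    rw [← integral_const_mul, ← integral_sub hfx (hgx.const_mul c), ← integral_const_mul]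
    refine abs_integral_le_integral_abs.trans <| setIntegral_mono_on
      (hfx.sub (hgx.const_mul c)).abs (hgx.const_mul _) measurableSet_Ioi fun t ht => ?_
    obtain ⟨hut, hgt, hfgt⟩ := hb t ((le_of_max_le_right hx).trans ht.le)
    rw [hfgt, ← sub_mul, abs_mul, abs_of_nonneg hgt]
    exact mul_le_mul_of_nonneg_right hut hgt
  rw [Real.dist_eq, div_sub' hpos.ne', abs_div, abs_of_pos hpos, div_lt_iff₀ hpos, mul_comm]
  linarith [mul_lt_mul_of_pos_right (half_lt_self hε) hpos]

end TailIntegrals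

lemma isLittleO_atTop_of_abs_sub_le {F ℓ : ℝ → ℝ} (hℓ : Tendsto ℓ atTop atTop)
    (h : ∀ ε > 0, ∃ b, ∀ x ≥ b, |F x - F b| ≤ ε * ℓ x) : F =o[atTop] ℓ := by
  refine isLittleO_iff.2 fun c hc => ?_
  obtain ⟨b, hb⟩ := h (c / 2) (half_pos hc)
  filter_upwards [eventually_ge_atTop b, hℓ.eventually_ge_atTop (2 * |F b| / c)] with x hxb hℓx
  rw [div_le_iff₀ hc] at hℓx
  have hℓ0 : 0 ≤ ℓ x := by nlinarith [abs_nonneg (F b)]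
  rw [Real.norm_eq_abs, Real.norm_eq_abs, abs_of_nonneg hℓ0]
  linarith [abs_sub_abs_le_abs_sub (F x) (F b), hb x hxb]

section Distribution

variable (μ : Measure ℝ)

lemma Hf_nonneg (x : ℝ) : 0 ≤ Hf μ x := ENNReal.toReal_nonneg

variable [IsFiniteMeasure μ]

lemma antitone_Hf : Antitone (Hf μ) := fun _ _ hxy =>
  ENNReal.toReal_mono (measure_ne_top μ _) (measure_mono fun _ hz => lt_of_le_of_lt hxy hz)

lemma antitone_tailF : Antitone (tailF μ) := fun _ _ hxy =>
  ENNReal.toReal_mono (measure_ne_top μ _) (measure_mono (Ioi_subset_Ioi hxy))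

lemma antitone_toReal_measure_Iio_neg : Antitone fun x => (μ (Iio (-x))).toReal :=
  fun _ _ hxy =>
    ENNReal.toReal_mono (measure_ne_top μ _) (measure_mono (Iio_subset_Iio (neg_le_neg hxy)))

lemma abs_Kf_le_Hf (x : ℝ) : |Kf μ x| ≤ Hf μ x := by
  have hright : (μ (Ioi x)).toReal ≤ Hf μ x := ENNReal.toReal_mono (measure_ne_top μ _)
    (measure_mono fun y (hy : x < y) => hy.trans_le (le_abs_self y))
  have hleft : (μ (Iio (-x))).toReal ≤ Hf μ x := ENNReal.toReal_mono (measure_ne_top μ _)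
    (measure_mono fun y (hy : y < -x) => (lt_neg.1 hy).trans_le (neg_le_abs y))
  rw [Kf, abs_sub_le_iff]
  constructor <;> linarith [(μ (Ioi x)).toReal_nonneg, (μ (Iio (-x))).toReal_nonneg]

lemma measurable_Hf : Measurable (Hf μ) := (antitone_Hf μ).measurable

lemma measurable_Kf : Measurable (Kf μ) :=
  (antitone_tailF μ).measurable.sub (antitone_toReal_measure_Iio_neg μ).measurable

lemma intervalIntegrable_Hf (a b : ℝ) : IntervalIntegrable (Hf μ) volume a b :=
  (antitone_Hf μ).intervalIntegrable

lemma intervalIntegrable_Kf (a b : ℝ) : IntervalIntegrable (Kf μ) volume a b :=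
  (antitone_tailF μ).intervalIntegrable.sub
    (antitone_toReal_measure_Iio_neg μ).intervalIntegrable

lemma countable_not_continuousAt_Hf : {t | ¬ContinuousAt (Hf μ) t}.Countable :=
  (antitone_Hf μ).countable_not_continuousAt

lemma countable_not_continuousAt_Kf : {t | ¬ContinuousAt (Kf μ) t}.Countable := by
  refine ((antitone_tailF μ).countable_not_continuousAt.union
    (antitone_toReal_measure_Iio_neg μ).countable_not_continuousAt).mono fun t ht => ?_
  by_contra h
  simp only [mem_union, mem_ofPred_eq, not_or, not_not] at h
  exact ht (h.1.sub h.2)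

lemma continuous_Af : Continuous (Af μ) :=
  intervalIntegral.continuous_primitive (intervalIntegrable_Kf μ) 0

lemma continuous_ellH : Continuous (ellH μ) :=
  intervalIntegral.continuous_primitive (intervalIntegrable_Hf μ) 0

lemma hasDerivAt_Af {t : ℝ} (ht : ContinuousAt (Kf μ) t) : HasDerivAt (Af μ) (Kf μ t) t :=
  intervalIntegral.integral_hasDerivAt_right (intervalIntegrable_Kf μ 0 t)
    (measurable_Kf μ).stronglyMeasurable.stronglyMeasurableAtFilter ht

lemma hasDerivAt_ellH {t : ℝ} (ht : ContinuousAt (Hf μ) t) : HasDerivAt (ellH μ) (Hf μ t) t :=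
  intervalIntegral.integral_hasDerivAt_right (intervalIntegrable_Hf μ 0 t)
    (measurable_Hf μ).stronglyMeasurable.stronglyMeasurableAtFilter ht

lemma ellH_sub_ellH (x y : ℝ) : ellH μ y - ellH μ x = ∫ t in x..y, Hf μ t :=
  intervalIntegral.integral_interval_sub_left (intervalIntegrable_Hf μ 0 y)
    (intervalIntegrable_Hf μ 0 x)

lemma monotone_ellH : Monotone (ellH μ) := fun x y hxy => by
  have := intervalIntegral.integral_nonneg (μ := volume) hxy fun t _ => Hf_nonneg μ t
  linarith [ellH_sub_ellH μ x y]

lemma ellH_nonneg {x : ℝ} (hx : 0 ≤ x) : 0 ≤ ellH μ x := by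
  simpa [ellH] using monotone_ellH μ hx

lemma abs_Af_le_ellH {x : ℝ} (hx : 0 ≤ x) : |Af μ x| ≤ ellH μ x :=
  intervalIntegral.norm_integral_le_of_norm_le (f := Kf μ) hx
    (ae_of_all _ fun t _ => abs_Kf_le_Hf μ t) (intervalIntegrable_Hf μ 0 x)

lemma tendsto_ellH_atTop (hmean : ∫⁻ x, ENNReal.ofReal |x| ∂μ = ⊤) :
    Tendsto (ellH μ) atTop atTop := by
  refine tendsto_atTop_atTop_of_monotone' (monotone_ellH μ) fun ⟨M, hM⟩ => ?_
  have hint : IntegrableOn (Hf μ) (Ioi 0) := by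
    refine integrableOn_Ioi_of_intervalIntegral_norm_bounded M 0
      (fun b => (intervalIntegrable_Hf μ 0 b).1) tendsto_id (Eventually.of_forall fun b => ?_)
    simp_rw [Real.norm_of_nonneg (Hf_nonneg μ _)]
    exact hM ⟨b, rfl⟩
  have hfin := hint.2
  simp only [HasFiniteIntegral, Hf, Real.enorm_eq_ofReal ENNReal.toReal_nonneg,
    ENNReal.ofReal_toReal (measure_ne_top μ _)] at hfin
  rw [← lintegral_eq_lintegral_meas_lt μ (ae_of_all _ fun x => abs_nonneg x)
    measurable_abs.aemeasurable, hmean] at hfin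
  exact lt_irrefl _ hfin

lemma integral_Ioi_Hf_div_ellH_sq (hℓ : Tendsto (ellH μ) atTop atTop) {x : ℝ}
    (hx : 0 < ellH μ x) : ∫ t in Ioi x, Hf μ t / ellH μ t ^ 2 = (ellH μ x)⁻¹ := by
  have hpos : ∀ y ∈ Ici x, 0 < ellH μ y := fun y hy => hx.trans_le (monotone_ellH μ hy)
  have hint : ∀ b, IntegrableOn (fun t => Hf μ t / ellH μ t ^ 2) (Ioc x b) := fun b => by
    rcases le_or_gt x b with hxb | hbx
    · simp_rw [div_eq_mul_inv]
      refine ((intervalIntegrable_Hf μ x b).mul_continuousOn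
        (((continuous_ellH μ).pow 2).continuousOn.inv₀ fun y hy => ?_)).1
      rw [uIcc_of_le hxb] at hy
      exact pow_ne_zero 2 (hpos y hy.1).ne'
    · simp [Ioc_eq_empty_of_le hbx.le]
  simpa using integral_Ioi_of_hasDerivAt_off_countable_of_nonneg
    (f := fun t => Hf μ t / ellH μ t ^ 2) (F := fun y => -(ellH μ y)⁻¹) (m := 0)
    (countable_not_continuousAt_Hf μ)
    ((continuous_ellH μ).continuousOn.inv₀ fun y hy => (hpos y hy).ne').neg
    (fun y hy => (((hasDerivAt_ellH μ (not_not.1 hy.2)).inv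
      (hpos y (Ioi_subset_Ici_self hy.1)).ne').neg).congr_deriv (by ring))
    hint (fun y _ => div_nonneg (Hf_nonneg μ y) (sq_nonneg _))
    (by simpa using (tendsto_inv_atTop_zero.comp hℓ).neg)

end Distribution

/-- `1 / m(x)`, so that `mF μ x = (mInv μ x)⁻¹` by definition. -/
noncomputable def mInv (μ : Measure ℝ) (x : ℝ) : ℝ := ∫ t in Ioi x, Hf μ t / Af μ t ^ 2

section Asymptotics

variable (μ : Measure ℝ) [IsFiniteMeasure μ]

lemma isLittleO_integral_mul_Kf {g : ℝ → ℝ} {a : ℝ} (hg : ContinuousOn g (Ici a))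
    (hg0 : Tendsto g atTop (𝓝 0)) (hℓ : Tendsto (ellH μ) atTop atTop) :
    (fun x => ∫ t in a..x, g t * Kf μ t) =o[atTop] ellH μ := by
  have hint : ∀ x y, a ≤ x → a ≤ y →
      IntervalIntegrable (fun t => g t * Kf μ t) volume x y := fun x y hx hy =>
    (intervalIntegrable_Kf μ x y).continuousOn_mul
      (hg.mono fun t ht => le_trans (le_min hx hy) ht.1)
  refine isLittleO_atTop_of_abs_sub_le hℓ fun ε hε => ?_
  obtain ⟨b, hb⟩ := eventually_atTop.1 (hg0.eventually (Metric.closedBall_mem_nhds 0 hε))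
  set b' := max (max a b) 0
  have hab' : a ≤ b' := (le_max_left a b).trans (le_max_left _ _)
  refine ⟨b', fun x hx => ?_⟩
  rw [intervalIntegral.integral_interval_sub_left (hint a x le_rfl (hab'.trans hx))
    (hint a b' le_rfl hab')]
  calc |∫ t in b'..x, g t * Kf μ t| ≤ ∫ t in b'..x, ε * Hf μ t := by
        refine intervalIntegral.norm_integral_le_of_norm_le (f := fun t => g t * Kf μ t) hx
          (ae_of_all _ fun t ht => ?_)
          ((intervalIntegrable_Hf μ b' x).const_mul ε)
        have hgt := hb t (((le_max_right a b).trans (le_max_left _ _)).trans ht.1.le)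
        rw [dist_zero_right] at hgt
        rw [norm_mul]
        exact mul_le_mul hgt (abs_Kf_le_Hf μ t) (norm_nonneg _) hε.le
    _ = ε * (ellH μ x - ellH μ b') := by
        rw [intervalIntegral.integral_const_mul, ellH_sub_ellH]
    _ ≤ ε * ellH μ x := by
        have := ellH_nonneg μ (le_max_right (max a b) 0)
        nlinarith

variable {μ} {x₀ : ℝ}

lemma hasDerivAt_mInv (hA : ∀ x ≥ x₀, 0 < Af μ x)
    (hInt : IntegrableOn (fun t => Hf μ t / Af μ t ^ 2) (Ioi x₀))
    {t : ℝ} (ht : x₀ < t) (hH : ContinuousAt (Hf μ) t) :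
    HasDerivAt (mInv μ) (-(Hf μ t / Af μ t ^ 2)) t := by
  have hmeas : Measurable fun t => Hf μ t / Af μ t ^ 2 :=
    (measurable_Hf μ).div ((continuous_Af μ).measurable.pow_const 2)
  exact hasDerivAt_integral_Ioi hInt ht hmeas.stronglyMeasurable.stronglyMeasurableAtFilter
    (hH.div ((continuous_Af μ).continuousAt.pow 2) (pow_ne_zero 2 (hA t ht.le).ne'))

/-- The identity `ℓ + A²/m = 2 ∫ (A/m) K + C`, shifted by `2 c A`. -/
lemma ellH_add_Af_mul_eq (hA : ∀ x ≥ x₀, 0 < Af μ x)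
    (hInt : IntegrableOn (fun t => Hf μ t / Af μ t ^ 2) (Ioi x₀)) (c : ℝ) {x : ℝ}
    (hx : x₀ ≤ x) :
    ellH μ x + Af μ x * (Af μ x * mInv μ x - 2 * c) =
      ellH μ x₀ + Af μ x₀ * (Af μ x₀ * mInv μ x₀ - 2 * c) +
        2 * ∫ t in x₀..x, (Af μ t * mInv μ t - c) * Kf μ t := by
  have hφ : ContinuousOn (fun t => Af μ t * mInv μ t) (Icc x₀ x) :=
    ((continuous_Af μ).continuousOn.mul hInt.continuousOn_Ici_primitive_Ioi).mono
      Icc_subset_Ici_self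
  have key := integral_eq_of_hasDerivAt_off_countable_of_le
    (fun y => ellH μ y + Af μ y * (Af μ y * mInv μ y - 2 * c))
    (fun t => 2 * ((Af μ t * mInv μ t - c) * Kf μ t)) hx
    ((countable_not_continuousAt_Hf μ).union (countable_not_continuousAt_Kf μ))
    ((continuous_ellH μ).continuousOn.add
      ((continuous_Af μ).continuousOn.mul (hφ.sub continuousOn_const)))
    (fun t ht => ?_)
    (((intervalIntegrable_Kf μ x₀ x).continuousOn_mul
      (by rw [uIcc_of_le hx]; exact hφ.sub continuousOn_const)).const_mul 2)
  · rw [intervalIntegral.integral_const_mul] at key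
    linarith
  obtain ⟨⟨htx₀, -⟩, htH, htK⟩ : (x₀ < t ∧ t < x) ∧ ContinuousAt (Hf μ) t ∧
      ContinuousAt (Kf μ) t := by
    simpa [not_or] using ht
  have hAt := (hA t htx₀.le).ne'
  refine ((hasDerivAt_ellH μ htH).add ((hasDerivAt_Af μ htK).mul
    (((hasDerivAt_Af μ htK).mul (hasDerivAt_mInv hA hInt htx₀ htH)).sub_const
      (2 * c)))).congr_deriv ?_
  simp only [Pi.mul_apply]
  field_simp
  ring

end Asymptotics

section Directions

variable {μ : Measure ℝ} [IsFiniteMeasure μ] {x₀ κ : ℝ}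

lemma tendsto_mF_div_Af_of_tendsto_Af_div_ellH (hℓ : Tendsto (ellH μ) atTop atTop)
    (hInt : IntegrableOn (fun t => Hf μ t / Af μ t ^ 2) (Ioi x₀)) (hκ : 0 < κ)
    (h : Tendsto (fun x => Af μ x / ellH μ x) atTop (𝓝 κ)) :
    Tendsto (fun x => mF μ x / Af μ x) atTop (𝓝 κ) := by
  have hℓpos : ∀ᶠ x in atTop, 0 < ellH μ x := hℓ.eventually_gt_atTop 0
  -- L'Hôpital for tails, against `∫ₓ^∞ H / ℓ² = 1 / ℓ(x)`
  have htail : Tendsto (fun x => mInv μ x * ellH μ x) atTop (𝓝 ((κ⁻¹) ^ 2)) := by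
    have hu : Tendsto (fun t => (ellH μ t / Af μ t) ^ 2) atTop (𝓝 ((κ⁻¹) ^ 2)) := by
      simpa only [inv_div] using (h.inv₀ hκ.ne').pow 2
    refine (tendsto_integral_Ioi_div_integral_Ioi (g := fun t => Hf μ t / ellH μ t ^ 2) hInt
      (Eventually.of_forall fun t => div_nonneg (Hf_nonneg μ t) (sq_nonneg _)) ?_ ?_ hu).congr' ?_
    · filter_upwards [hℓpos] with x hx
      rw [integral_Ioi_Hf_div_ellH_sq μ hℓ hx]
      positivity
    · filter_upwards [hℓpos] with t ht
      rcases eq_or_ne (Af μ t) 0 with hA | hA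
      · simp [hA]
      · field_simp
    · filter_upwards [hℓpos] with x hx
      rw [integral_Ioi_Hf_div_ellH_sq μ hℓ hx, div_inv_eq_mul, mInv]
  have hlim : (((κ⁻¹) ^ 2 * κ)⁻¹) = κ := by field_simp
  rw [← hlim]
  refine ((htail.mul h).inv₀ (by positivity)).congr' ?_
  filter_upwards [hℓpos] with x hx
  rw [mF, ← mInv]
  field_simp

lemma tendsto_Af_div_ellH_of_tendsto_mF_div_Af (hℓ : Tendsto (ellH μ) atTop atTop)
    (hA : ∀ x ≥ x₀, 0 < Af μ x)
    (hInt : IntegrableOn (fun t => Hf μ t / Af μ t ^ 2) (Ioi x₀)) (hκ : 0 < κ)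
    (h : Tendsto (fun x => mF μ x / Af μ x) atTop (𝓝 κ)) :
    Tendsto (fun x => Af μ x / ellH μ x) atTop (𝓝 κ) := by
  set φ := fun x => Af μ x * mInv μ x - κ⁻¹
  have hφ : Tendsto φ atTop (𝓝 0) := by
    simpa [φ, mF, mInv, mul_comm] using (h.inv₀ hκ.ne').sub_const κ⁻¹
  have hφ_cont : ContinuousOn φ (Ici x₀) :=
    ((continuous_Af μ).continuousOn.mul hInt.continuousOn_Ici_primitive_Ioi).sub
      continuousOn_const
  have hAO : Af μ =O[atTop] ellH μ := by
    refine IsBigO.of_bound 1 ?_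
    filter_upwards [eventually_ge_atTop 0] with x hx
    rw [one_mul, Real.norm_eq_abs, Real.norm_eq_abs, abs_of_nonneg (ellH_nonneg μ hx)]
    exact abs_Af_le_ellH μ hx
  have hsmall : (fun x => ellH μ x - κ⁻¹ * Af μ x) =o[atTop] ellH μ := by
    have hconst : (fun _ => ellH μ x₀ + Af μ x₀ * (Af μ x₀ * mInv μ x₀ - 2 * κ⁻¹))
        =o[atTop] ellH μ :=
      isLittleO_const_left.2 (Or.inr (tendsto_norm_atTop_atTop.comp hℓ))
    have hint := (isLittleO_integral_mul_Kf μ hφ_cont hφ hℓ).const_mul_left 2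
    have hprod : (fun x => Af μ x * φ x) =o[atTop] ellH μ := by
      simpa using hAO.mul_isLittleO ((isLittleO_one_iff ℝ).2 hφ)
    refine ((hconst.add hint).sub hprod).congr' ?_ EventuallyEq.rfl
    filter_upwards [eventually_ge_atTop x₀] with x hx
    have := ellH_add_Af_mul_eq hA hInt κ⁻¹ hx
    simp only [φ] at this ⊢
    linarith
  have hlim := (hsmall.tendsto_div_nhds_zero.const_sub 1).const_mul κ
  rw [sub_zero, mul_one] at hlim
  refine hlim.congr' ?_
  filter_upwards [hℓ.eventually_gt_atTop 0] with x hx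
  field_simp
  ring

end Directions

theorem stmt11_general (μ : Measure ℝ) [IsProbabilityMeasure μ]
    (hmean : ∫⁻ x, ENNReal.ofReal |x| ∂μ = ⊤)
    (hHb : HbCond μ) (κ : ℝ) (hκ : 0 < κ) :
    (Tendsto (fun x => Af μ x / ellH μ x) atTop (𝓝 κ) →
      Tendsto (fun x => mF μ x / Af μ x) atTop (𝓝 κ)) ∧
    (Tendsto (fun x => mF μ x / Af μ x) atTop (𝓝 κ) →
      Tendsto (fun x => Af μ x / ellH μ x) atTop (𝓝 κ)) := by
  obtain ⟨x₀, -, hA, hInt⟩ := hHb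
  have hℓ := tendsto_ellH_atTop μ hmean
  exact ⟨tendsto_mF_div_Af_of_tendsto_Af_div_ellH hℓ hInt hκ,
    tendsto_Af_div_ellH_of_tendsto_mF_div_Af hℓ hA hInt hκ⟩

/-- Under (Ha) and (Hb), with `κ > 0`: `A/ℓ → κ` implies `m/A → κ`,
and conversely `m/A → κ` implies `A/ℓ → κ`. -/
theorem stmt11 (μ : Measure ℝ) [IsProbabilityMeasure μ]
    (hmean : ∫⁻ x, ENNReal.ofReal |x| ∂μ = ⊤)
    (hHa : HaCond μ) (hHb : HbCond μ) (κ : ℝ) (hκ : 0 < κ) :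
    (Tendsto (fun x => Af μ x / ellH μ x) atTop (𝓝 κ) →
      Tendsto (fun x => mF μ x / Af μ x) atTop (𝓝 κ)) ∧
    (Tendsto (fun x => mF μ x / Af μ x) atTop (𝓝 κ) →
      Tendsto (fun x => Af μ x / ellH μ x) atTop (𝓝 κ)) :=
  stmt11_general μ hmean hHb κ hκ
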